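/- arXiv:2105.00413 — 4 statements merged into one kernel-verified Lean document; each statement's English description precedes it below -/
import Mathlib

section
/- If M is an (n,k)-weak cotorsion right R-module, then Ext^j_R(N, M) = 0 for every j ≥ m+1 and every right R-module N of n-weak flat dimension at most m + k. -/
/-!
Common definitions for formalizing "(n,k)-weak cotorsion modules" over an arbitrary
(not necessarily commutative) ring `R`.  Left `R`-modules are objects of
`ModuleCat R`, right `R`-modules are objects of `ModuleCat Rᵐᵒᵖ`.

Since Mathlib does not provide `Tor` of a right module with a left module over a
noncommutative ring, we encode the vanishing of `Tor_i^R(N, M)` (for `N` a right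
module and `M` a left module) by the equivalent condition
`Ext^i_{Rᵐᵒᵖ}(N, M⋆) = 0`, where `M⋆ = Hom_ℤ(M, ℚ/ℤ)` is the character module
(a right module).  This is equivalent because `ℚ/ℤ` is an injective cogenerator:
`Ext^i_{Rᵐᵒᵖ}(N, M⋆) ≅ (Tor_i^R(N, M))⋆`, and an abelian group vanishes iff its
character group does.
-/

open CategoryTheory

universe u

noncomputable section

/-- The character group `Hom_ℤ(N, ℚ/ℤ)`. -/
def CharGroup (N : Type u) [AddCommGroup N] : Type u := N →+ AddCircle (1 : ℚ)

instance (N : Type u) [AddCommGroup N] : AddCommGroup (CharGroup N) :=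
  inferInstanceAs (AddCommGroup (N →+ AddCircle (1 : ℚ)))

namespace CharGroup

variable {N : Type u} [AddCommGroup N]

/-- View an element of the character group as an additive monoid hom. -/
def toHom (f : CharGroup N) : N →+ AddCircle (1 : ℚ) := f

/-- Build an element of the character group from an additive monoid hom. -/
def ofHom (f : N →+ AddCircle (1 : ℚ)) : CharGroup N := f

theorem hom_ext {f g : CharGroup N} (h : ∀ m, toHom f m = toHom g m) : f = g :=
  AddMonoidHom.ext h

end CharGroup

open CharGroup in
/-- Left module structure on the character group of a right module. -/
instance charGroupModuleLeft (R : Type u) [Ring R] (N : Type u) [AddCommGroup N]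
    [Module Rᵐᵒᵖ N] : Module R (CharGroup N) where
  smul r f := ofHom ((toHom f).comp
    (AddMonoidHom.mk' (fun m => MulOpposite.op r • m) (fun a b => smul_add _ a b)))
  one_smul f := hom_ext fun m => by
    show toHom f (MulOpposite.op (1 : R) • m) = toHom f m
    rw [MulOpposite.op_one, one_smul]
  mul_smul r s f := hom_ext fun m => by
    show toHom f (MulOpposite.op (r * s) • m)
      = toHom f (MulOpposite.op s • MulOpposite.op r • m)
    rw [MulOpposite.op_mul, mul_smul]
  smul_zero r := CharGroup.hom_ext fun m => rfl
  smul_add r f g := CharGroup.hom_ext fun m => rfl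
  add_smul r s f := hom_ext fun m => by
    show toHom f (MulOpposite.op (r + s) • m)
      = toHom f (MulOpposite.op r • m) + toHom f (MulOpposite.op s • m)
    rw [MulOpposite.op_add, add_smul, map_add]
  zero_smul f := hom_ext fun m => by
    show toHom f (MulOpposite.op (0 : R) • m) = 0
    rw [MulOpposite.op_zero, zero_smul, map_zero]

open CharGroup in
/-- Right module structure on the character group of a left module. -/
instance charGroupModuleRight (R : Type u) [Ring R] (N : Type u) [AddCommGroup N]
    [Module R N] : Module Rᵐᵒᵖ (CharGroup N) where
  smul r f := ofHom ((toHom f).comp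
    (AddMonoidHom.mk' (fun m => r.unop • m) (fun a b => smul_add _ a b)))
  one_smul f := hom_ext fun m => by
    show toHom f ((1 : Rᵐᵒᵖ).unop • m) = toHom f m
    rw [MulOpposite.unop_one, one_smul]
  mul_smul r s f := hom_ext fun m => by
    show toHom f ((r * s).unop • m) = toHom f (s.unop • r.unop • m)
    rw [MulOpposite.unop_mul, mul_smul]
  smul_zero r := CharGroup.hom_ext fun m => rfl
  smul_add r f g := CharGroup.hom_ext fun m => rfl
  add_smul r s f := hom_ext fun m => by
    show toHom f ((r + s).unop • m) = toHom f (r.unop • m) + toHom f (s.unop • m)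
    rw [MulOpposite.unop_add, add_smul, map_add]
  zero_smul f := hom_ext fun m => by
    show toHom f ((0 : Rᵐᵒᵖ).unop • m) = 0
    rw [MulOpposite.unop_zero, zero_smul, map_zero]

variable (R : Type u) [Ring R]

/-- `extVanish S i A B` says that `Ext^i_S(A, B) = 0`. -/
def extVanish (S : Type u) [Ring S] (i : ℕ) (A B : ModuleCat.{u} S) : Prop :=
  Subsingleton (((Ext ℤ (ModuleCat.{u} S) i).obj (Opposite.op A)).obj B)

/-- The character module of a right `R`-module, as a left `R`-module. -/
def charLeft (N : ModuleCat.{u} Rᵐᵒᵖ) : ModuleCat.{u} R :=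
  ModuleCat.of R (CharGroup N)

/-- The character module of a left `R`-module, as a right `R`-module. -/
def charRight (M : ModuleCat.{u} R) : ModuleCat.{u} Rᵐᵒᵖ :=
  ModuleCat.of Rᵐᵒᵖ (CharGroup M)

/-- `torVanish R i N M` encodes `Tor_i^R(N, M) = 0` for a right module `N` and a
left module `M`, via the character module duality
`Ext^i_R(M, N⋆) ≅ (Tor_i^R(N, M))⋆`. -/
def torVanish (i : ℕ) (N : ModuleCat.{u} Rᵐᵒᵖ) (M : ModuleCat.{u} R) : Prop :=
  extVanish R i M (charLeft R N)

/-- `K` is a special super finitely presented `S`-module (for the parameter `n`):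
`K` is the image of `F_n → F_{n-1}` in a projective resolution
`⋯ → F_{n+1} → F_n → ⋯ → F_0 → U → 0` of some module `U` in which `F_i` is finitely
generated projective for all `i ≥ n`.  (For `n = 0` the distinguished module is `U`
itself, matching `Ext^{n+1}(U, -) ≅ Ext^1(K_{n-1}, -)`.) -/
def IsSpecialSFP (S : Type u) [Ring S] (n : ℕ) (K : ModuleCat.{u} S) : Prop :=
  ∃ (U : ModuleCat.{u} S) (F : ℕ → ModuleCat.{u} S)
    (d : ∀ i, F (i + 1) →ₗ[S] F i) (π : F 0 →ₗ[S] U),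
      (∀ i, Module.Projective S (F i)) ∧
      (∀ i, n ≤ i → Module.Finite S (F i)) ∧
      Function.Surjective π ∧ Function.Exact (d 0) π ∧
      (∀ i, Function.Exact (d (i + 1)) (d i)) ∧
      (if n = 0 then Nonempty ((K : Type u) ≃ₗ[S] U)
       else Nonempty ((K : Type u) ≃ₗ[S] LinearMap.range (d (n - 1))))

/-- The `n`-weak injective dimension of a left `S`-module `M` is at most `k`. -/
def nwidLE (S : Type u) [Ring S] (n k : ℕ) (M : ModuleCat.{u} S) : Prop :=
  ∀ K : ModuleCat.{u} S, IsSpecialSFP S n K → extVanish S (k + 1) K M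

/-- The `n`-weak flat dimension of a right `R`-module `N` is at most `k`:
`Tor_{k+1}^R(N, K) = 0` for every special super finitely presented left module `K`. -/
def nwfdLE (n k : ℕ) (N : ModuleCat.{u} Rᵐᵒᵖ) : Prop :=
  ∀ K : ModuleCat.{u} R, IsSpecialSFP R n K → torVanish R (k + 1) N K

/-- A right `R`-module `M` is `(n,k)`-weak cotorsion if `Ext^1(N, M) = 0` for every
right module `N` of `n`-weak flat dimension at most `k`. -/
def IsNKWeakCotorsion (n k : ℕ) (M : ModuleCat.{u} Rᵐᵒᵖ) : Prop :=
  ∀ N : ModuleCat.{u} Rᵐᵒᵖ, nwfdLE R n k N → extVanish Rᵐᵒᵖ 1 N M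

/-- Projective dimension at most `k`, via Ext vanishing. -/
def pdLE (S : Type u) [Ring S] (k : ℕ) (K : ModuleCat.{u} S) : Prop :=
  ∀ M : ModuleCat.{u} S, extVanish S (k + 1) K M

/-- Injective dimension at most `k`, via Ext vanishing. -/
def idLE (S : Type u) [Ring S] (k : ℕ) (M : ModuleCat.{u} S) : Prop :=
  ∀ N : ModuleCat.{u} S, extVanish S (k + 1) N M

/-- Flat dimension of a right module at most `k`, via Tor vanishing. -/
def fdLE (k : ℕ) (N : ModuleCat.{u} Rᵐᵒᵖ) : Prop :=
  ∀ A : ModuleCat.{u} R, torVanish R (k + 1) N A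

/-- `l.n.sp.gldim(R) ≤ k` : every special super finitely presented left module has
projective dimension at most `k`. -/
def lnspGldimLE (n k : ℕ) : Prop :=
  ∀ K : ModuleCat.{u} R, IsSpecialSFP R n K → pdLE R k K

/-- `w.gl.dim(R) ≤ k`. -/
def wGldimLE (k : ℕ) : Prop :=
  ∀ N : ModuleCat.{u} Rᵐᵒᵖ, fdLE R k N

/-- A right `R`-module `M` is `k`-cotorsion if `Ext^1(F, M) = 0` for every right
module `F` of flat dimension at most `k`. -/
def IsKCotorsion (k : ℕ) (M : ModuleCat.{u} Rᵐᵒᵖ) : Prop :=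
  ∀ F : ModuleCat.{u} Rᵐᵒᵖ, fdLE R k F → extVanish Rᵐᵒᵖ 1 F M

/-- `φ : E → D` is a `𝒞`-precover of `D`. -/
def IsPrecover (S : Type u) [Ring S] (𝒞 : ModuleCat.{u} S → Prop)
    (E D : ModuleCat.{u} S) (φ : E →ₗ[S] D) : Prop :=
  𝒞 E ∧ ∀ F : ModuleCat.{u} S, 𝒞 F → ∀ g : F →ₗ[S] D, ∃ h : F →ₗ[S] E, φ ∘ₗ h = g

/-- `φ : E → D` is a `𝒞`-cover of `D`. -/
def IsCover (S : Type u) [Ring S] (𝒞 : ModuleCat.{u} S → Prop)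
    (E D : ModuleCat.{u} S) (φ : E →ₗ[S] D) : Prop :=
  IsPrecover S 𝒞 E D φ ∧ ∀ g : E →ₗ[S] E, φ ∘ₗ g = φ → Function.Bijective g

/-- `f : X → F` is a `𝒞`-preenvelope of `X`. -/
def IsPreenvelope (S : Type u) [Ring S] (𝒞 : ModuleCat.{u} S → Prop)
    (X F : ModuleCat.{u} S) (f : X →ₗ[S] F) : Prop :=
  𝒞 F ∧ ∀ F' : ModuleCat.{u} S, 𝒞 F' → ∀ g : X →ₗ[S] F', ∃ h : F →ₗ[S] F', h ∘ₗ f = g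

/-- A module is reduced if it has no nonzero injective submodules. -/
def IsReducedModule (S : Type u) [Ring S] (M : ModuleCat.{u} S) : Prop :=
  ∀ N : Submodule S M, Module.Injective S N → N = ⊥

/-- `D` is an `m`-th cosyzygy of `M`: there is an exact sequence
`0 → M → E^0 → ⋯ → E^{m-1} → D → 0` with each `E^i` injective. -/
def IsCosyzygy (S : Type u) [Ring S] : ℕ → ModuleCat.{u} S → ModuleCat.{u} S → Prop
  | 0, M, D => Nonempty ((M : Type u) ≃ₗ[S] D)
  | m + 1, M, D => ∃ (C E : ModuleCat.{u} S), IsCosyzygy S m M C ∧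
      Module.Injective S E ∧
      ∃ (ι : C →ₗ[S] E) (p : E →ₗ[S] D),
        Function.Injective ι ∧ Function.Surjective p ∧ Function.Exact ι p


/-- A left `R`-module `F` is flat: `Tor_1(A, F) = 0` for every right module `A`
(encoded via character duality, as above). -/
def IsFlatModule (R : Type u) [Ring R] (F : ModuleCat.{u} R) : Prop :=
  ∀ A : ModuleCat.{u} Rᵐᵒᵖ, torVanish R 1 A F

end


/-! ### Auxiliary development for the proof of `stmt4` -/

noncomputable section WCAux

open CategoryTheory

namespace WC

lemma isZero_iff {R : Type*} [Ring R] {M : ModuleCat R} :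
    Limits.IsZero M ↔ Subsingleton M := by
  constructor
  · intro h
    refine ⟨fun a b => ?_⟩
    have h1 : (𝟙 M : M ⟶ M) = 0 := h.eq_of_src _ _
    have ha : a = (0 : M ⟶ M) a := by rw [← h1]; rfl
    have hb : b = (0 : M ⟶ M) b := by rw [← h1]; rfl
    simp only [LinearMap.zero_apply] at ha hb
    rw [ha, hb]
    rfl
  · intro h
    exact ModuleCat.isZero_of_subsingleton M

variable {S : Type u} [Ring S]

/-- A concrete projective resolution of a module. -/
structure ConcRes (S : Type u) [Ring S] (A : ModuleCat.{u} S) where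
  F : ℕ → ModuleCat.{u} S
  d : ∀ i, F (i + 1) ⟶ F i
  pi : F 0 ⟶ A
  proj : ∀ i, Module.Projective S (F i)
  hsurj : Function.Surjective pi
  hex0 : Function.Exact (d 0) pi
  hex : ∀ i, Function.Exact (d (i + 1)) (d i)

namespace ConcRes

variable {A : ModuleCat.{u} S} (P : ConcRes S A)

lemma d_comp_d (n : ℕ) : P.d (n + 1) ≫ P.d n = 0 := by
  ext x
  exact (P.hex n).apply_apply_eq_zero x

def complex : ChainComplex (ModuleCat.{u} S) ℕ :=
  ChainComplex.of P.F P.d P.d_comp_d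

@[simp] lemma complex_X (n : ℕ) : P.complex.X n = P.F n := rfl

@[simp] lemma complex_d (n : ℕ) : P.complex.d (n + 1) n = P.d n :=
  ChainComplex.of_d _ _ _

instance (n : ℕ) : Projective (P.complex.X n) :=
  (IsProjective.iff_projective _).mp (P.proj n)

lemma d_comp_pi : P.complex.d 1 0 ≫ P.pi = 0 := by
  have h : P.complex.d 1 0 = P.d 0 := P.complex_d 0
  rw [h]
  ext x
  exact P.hex0.apply_apply_eq_zero x

lemma complex_exactAt_succ (n : ℕ) : P.complex.ExactAt (n + 1) := by
  rw [HomologicalComplex.exactAt_iff' _ (n + 2) (n + 1) n (by simp) (by simp)]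
  refine (ShortComplex.moduleCat_exact_iff _).2 ?_
  intro x hx
  have hx' : P.d n x = 0 := by
    rw [← P.complex_d n]
    exact hx
  obtain ⟨y, hy⟩ := (P.hex n x).mp hx'
  refine ⟨y, ?_⟩
  show P.complex.d (n + 2) (n + 1) y = x
  rw [P.complex_d (n + 1)]
  exact hy

def res : ProjectiveResolution A where
  complex := P.complex
  π := (ChainComplex.toSingle₀Equiv _ _).symm ⟨P.pi, P.d_comp_pi⟩
  quasiIso := ⟨fun n => by
    cases n with
    | zero =>
      rw [ChainComplex.quasiIsoAt₀_iff, ShortComplex.quasiIso_iff_of_zeros']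
      · refine (ShortComplex.exact_and_epi_g_iff_of_iso
          (S₂ := ShortComplex.mk (P.complex.d 1 0) P.pi P.d_comp_pi) ?_).2 ⟨?_, ?_⟩
        · exact ShortComplex.isoMk (Iso.refl _) (Iso.refl _) (Iso.refl _) (by ext x; rfl)
            (by ext x; exact congrArg (fun g => g.hom x) (ChainComplex.toSingle₀Equiv_symm_apply_f_zero
              (C := P.complex) (X := A) P.pi P.d_comp_pi))
        · refine (ShortComplex.moduleCat_exact_iff
            (ShortComplex.mk (P.complex.d 1 0) P.pi P.d_comp_pi)).2 ?_
          intro x hx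
          obtain ⟨y, hy⟩ := (P.hex0 x).mp hx
          refine ⟨y, ?_⟩
          show P.complex.d 1 0 y = x
          rw [P.complex_d 0]
          exact hy
        · exact (ModuleCat.epi_iff_surjective _).2 P.hsurj
      all_goals rfl
    | succ n =>
      rw [quasiIsoAt_iff_exactAt' _ _ (ChainComplex.exactAt_succ_single_obj A n)]
      exact P.complex_exactAt_succ n⟩

lemma extVanish_succ_iff (B : ModuleCat.{u} S) (i : ℕ) :
    extVanish S (i + 1) A B ↔
      ∀ f : P.F (i + 1) ⟶ B, (∀ x, f (P.d (i + 1) x) = 0) →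
        ∃ g : P.F i ⟶ B, ∀ x, g (P.d i x) = f x := by
  have e := P.res.isoExt (R := ℤ) (i + 1) B
  have h1 : extVanish S (i + 1) A B ↔
      Subsingleton ((P.complex.linearYonedaObj ℤ B).homology (i + 1)) :=
    Equiv.subsingleton_congr ((forget (ModuleCat ℤ)).mapIso e).toEquiv
  rw [h1, ← WC.isZero_iff, ← HomologicalComplex.exactAt_iff_isZero_homology,
    HomologicalComplex.exactAt_iff' _ i (i + 1) (i + 2) (by simp) (by simp),
    ShortComplex.moduleCat_exact_iff]
  constructor
  · intro h f hf
    obtain ⟨g, hg⟩ := h f (by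
      show P.complex.d (i + 2) (i + 1) ≫ f = 0
      ext x
      show f (P.complex.d (i + 2) (i + 1) x) = 0
      rw [P.complex_d (i + 1)]
      exact hf x)
    have hg' : P.complex.d (i + 1) i ≫ g = f := hg
    refine ⟨g, fun x => ?_⟩
    have h2 : (P.complex.d (i + 1) i ≫ g) x = f x := by rw [hg']; rfl
    rw [← P.complex_d i]
    exact h2
  · intro h f hf
    let f' : P.F (i + 1) ⟶ B := f
    have hf' : P.complex.d (i + 2) (i + 1) ≫ f' = 0 := hf
    obtain ⟨g, hg⟩ := h f' (fun x => by
      have h2 : (P.complex.d (i + 2) (i + 1) ≫ f') x = 0 := by rw [hf']; rfl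
      show f' (P.d (i + 1) x) = 0
      rw [← P.complex_d (i + 1)]
      exact h2)
    refine ⟨g, ?_⟩
    show P.complex.d (i + 1) i ≫ g = f'
    ext x
    show g (P.complex.d (i + 1) i x) = f' x
    rw [P.complex_d i]
    exact hg x

end ConcRes

/-! ### The free resolution of a module -/

def freeCover (M : ModuleCat.{u} S) : ModuleCat.{u} S :=
  ModuleCat.of S ((M : Type u) →₀ S)

def freeProj (M : ModuleCat.{u} S) : freeCover M ⟶ M :=
  ModuleCat.ofHom (Finsupp.linearCombination S id)

lemma freeProj_surjective (M : ModuleCat.{u} S) : Function.Surjective (freeProj M) :=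
  Finsupp.linearCombination_surjective S Function.surjective_id

instance (M : ModuleCat.{u} S) : Module.Projective S (freeCover M) :=
  inferInstanceAs (Module.Projective S ((M : Type u) →₀ S))

def kerMod (M : ModuleCat.{u} S) : ModuleCat.{u} S :=
  ModuleCat.of S (LinearMap.ker (freeProj M).hom)

/-- The inclusion of the kernel composed with the free cover projection. -/
def kerStep (M : ModuleCat.{u} S) : freeCover (kerMod M) ⟶ freeCover M :=
  ModuleCat.ofHom ((LinearMap.ker (freeProj M).hom).subtype.comp (freeProj (kerMod M)).hom)

lemma exact_kerStep (M : ModuleCat.{u} S) : Function.Exact (kerStep M) (freeProj M) := by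
  intro y
  constructor
  · intro hy
    obtain ⟨w, hw⟩ := freeProj_surjective (kerMod M) (show LinearMap.ker (freeProj M).hom from ⟨y, hy⟩)
    exact ⟨w, congrArg (Subtype.val : LinearMap.ker (freeProj M).hom → _) hw⟩
  · rintro ⟨w, rfl⟩
    exact (show LinearMap.ker (freeProj M).hom from freeProj (kerMod M) w).2

def syzChain (A : ModuleCat.{u} S) : ℕ → ModuleCat.{u} S
  | 0 => A
  | n + 1 => kerMod (syzChain A n)

def freeRes (A : ModuleCat.{u} S) : ConcRes S A where
  F n := freeCover (syzChain A n)
  d n := kerStep (syzChain A n)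
  pi := freeProj A
  proj n := inferInstance
  hsurj := freeProj_surjective A
  hex0 := exact_kerStep A
  hex n := by
    intro y
    show kerStep (syzChain A n) y = 0 ↔ y ∈ Set.range (kerStep (syzChain A (n + 1)))
    have h1 : kerStep (syzChain A n) y = 0 ↔ freeProj (kerMod (syzChain A n)) y = 0 := by
      constructor
      · intro h
        apply Subtype.val_injective
        exact h
      · intro h
        show ((LinearMap.ker (freeProj (syzChain A n)).hom).subtype)
          (freeProj (kerMod (syzChain A n)) y) = 0
        rw [h]
        simp
        rfl
    rw [h1]
    exact exact_kerStep (kerMod (syzChain A n)) y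

/-! ### Dimension shifting in the first variable -/

lemma extVanish_succ_of_ses {A P B M : ModuleCat.{u} S} (ι : A ⟶ P) (p : P ⟶ B)
    (hP : Module.Projective S P) (hι : Function.Injective ι) (hp : Function.Surjective p)
    (hexx : Function.Exact ι p) (i : ℕ) (hi : 1 ≤ i)
    (h : extVanish S i A M) : extVanish S (i + 1) B M := by
  obtain ⟨i', rfl⟩ : ∃ i', i = i' + 1 := ⟨i - 1, by omega⟩
  set Q : ConcRes S A := freeRes A with hQ
  let RB : ConcRes S B :=
    { F := fun n => match n with
        | 0 => P
        | (m + 1) => Q.F m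
      d := fun n => match n with
        | 0 => Q.pi ≫ ι
        | (m + 1) => Q.d m
      pi := p
      proj := fun n => match n with
        | 0 => hP
        | (m + 1) => Q.proj m
      hsurj := hp
      hex0 := by
        intro y
        constructor
        · intro hy
          obtain ⟨a, ha⟩ := (hexx y).mp hy
          obtain ⟨w, hw⟩ := Q.hsurj a
          exact ⟨w, by show ι (Q.pi w) = y; rw [hw, ha]⟩
        · rintro ⟨w, rfl⟩
          exact hexx.apply_apply_eq_zero (Q.pi w)
      hex := fun n => match n with
        | 0 => by
          intro y
          have h1 : (Q.pi ≫ ι) y = 0 ↔ Q.pi y = 0 := by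
            constructor
            · intro hy
              apply hι
              simpa using hy
            · intro hy
              show ι (Q.pi y) = 0
              rw [hy]
              simp
          rw [h1]
          exact Q.hex0 y
        | (m + 1) => Q.hex m }
  rw [RB.extVanish_succ_iff M (i' + 1)]
  intro f hf
  exact ((Q.extVanish_succ_iff M i').mp h) f hf

/-! ### Dimension shifting in the second variable -/

lemma extVanish_pred_of_inj_ses {X I Y K : ModuleCat.{u} S} (ι : X ⟶ I) (p : I ⟶ Y)
    (hI : Module.Injective S I) (hι : Function.Injective ι) (hp : Function.Surjective p)
    (hexx : Function.Exact ι p) (c : ℕ)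
    (h : extVanish S (c + 2) K X) : extVanish S (c + 1) K Y := by
  set Q : ConcRes S K := freeRes K with hQ
  rw [Q.extVanish_succ_iff Y c]
  have h2 := (Q.extVanish_succ_iff X (c + 1)).mp h
  intro f hf
  haveI := Q.proj (c + 1)
  obtain ⟨f'₀, hf'⟩ := Module.projective_lifting_property (R := S) p.hom f.hom hp
  let f' : Q.F (c + 1) ⟶ I := ModuleCat.ofHom f'₀
  have hf'app : ∀ x, p (f' x) = f x := fun x => by
    exact LinearMap.congr_fun hf' x
  have hmem : ∀ x : Q.F (c + 1 + 1), f' (Q.d (c + 1) x) ∈ LinearMap.range ι.hom := by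
    intro x
    apply (hexx (f' (Q.d (c + 1) x))).mp
    rw [hf'app]
    exact hf x
  let e := LinearEquiv.ofInjective ι.hom hι
  let u : Q.F (c + 1 + 1) ⟶ X :=
    ModuleCat.ofHom ((e.symm.toLinearMap).comp
      (LinearMap.codRestrict (LinearMap.range ι.hom) (f'₀.comp (Q.d (c + 1)).hom) hmem))
  have hu : ∀ x, ι (u x) = f' (Q.d (c + 1) x) := by
    intro x
    have h3 := e.apply_symm_apply ⟨f' (Q.d (c + 1) x), hmem x⟩
    have h4 := congrArg Subtype.val h3
    rw [LinearEquiv.ofInjective_apply] at h4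
    exact h4
  obtain ⟨v, hv⟩ := h2 u (by
    intro x
    apply hι
    have h5 : ι (u (Q.d (c + 1 + 1) x)) = f' (Q.d (c + 1) (Q.d (c + 1 + 1) x)) :=
      hu (Q.d (c + 1 + 1) x)
    rw [(Q.hex (c + 1)).apply_apply_eq_zero x] at h5
    simpa using h5)
  let h₀ : Q.F (c + 1) ⟶ I := f' - (v ≫ ι)
  have hh₀ : ∀ x, h₀ (Q.d (c + 1) x) = 0 := by
    intro x
    show f' (Q.d (c + 1) x) - ι (v (Q.d (c + 1) x)) = 0
    rw [hv x, hu x, sub_self]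
  have hker : LinearMap.ker (Q.d c).hom ≤ LinearMap.ker h₀.hom := by
    intro y hy
    obtain ⟨x, rfl⟩ := (Q.hex c y).mp hy
    exact hh₀ x
  let q : (Q.F (c + 1) ⧸ LinearMap.ker (Q.d c).hom) →ₗ[S] I :=
    Submodule.liftQ _ h₀.hom hker
  let eq2 := LinearMap.quotKerEquivRange (Q.d c).hom
  let g₀ : (LinearMap.range (Q.d c).hom) →ₗ[S] I :=
    q.comp eq2.symm.toLinearMap
  obtain ⟨w, hw⟩ := hI.out (LinearMap.range (Q.d c).hom).subtype
    Subtype.val_injective g₀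
  refine ⟨ModuleCat.ofHom w ≫ p, fun x => ?_⟩
  have hx1 : w (Q.d c x) = g₀ ⟨Q.d c x, LinearMap.mem_range_self _ x⟩ :=
    hw ⟨Q.d c x, LinearMap.mem_range_self _ x⟩
  have hx2 : eq2.symm ⟨Q.d c x, LinearMap.mem_range_self _ x⟩ =
      Submodule.Quotient.mk x :=
    LinearMap.quotKerEquivRange_symm_apply_image (f := (Q.d c).hom) x (LinearMap.mem_range_self _ x)
  have hx3 : g₀ ⟨Q.d c x, LinearMap.mem_range_self _ x⟩ = h₀ x := by
    show q (eq2.symm ⟨Q.d c x, LinearMap.mem_range_self _ x⟩) = h₀ x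
    rw [hx2]
    exact Submodule.liftQ_apply _ h₀.hom x
  show p (w (Q.d c x)) = f x
  rw [hx1, hx3]
  show p (f' x - ι (v x)) = f x
  rw [map_sub, hf'app, hexx.apply_apply_eq_zero (v x), sub_zero]

/-! ### Character module machinery -/

lemma char_extend {X Y : Type u} [AddCommGroup X] [AddCommGroup Y] (f : X →+ Y)
    (hf : Function.Injective f) (g : X →+ AddCircle (1 : ℚ)) :
    ∃ h : Y →+ AddCircle (1 : ℚ), ∀ x, h (f x) = g x := by
  obtain ⟨h, hh⟩ := CharacterModule.dual_surjective_of_injective (R := ℤ)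
    f.toIntLinearMap hf (g : CharacterModule X)
  refine ⟨(h : CharacterModule Y), fun x => ?_⟩
  rw [← hh]
  rfl

variable (R : Type u) [Ring R]

/-- The contravariant action of character modules. -/
def charDual {P N : ModuleCat.{u} Rᵐᵒᵖ} (p : P ⟶ N) : charLeft R N ⟶ charLeft R P := ModuleCat.ofHom {
  toFun := fun f => CharGroup.ofHom ((CharGroup.toHom f).comp p.hom.toAddMonoidHom)
  map_add' := fun f g => rfl
  map_smul' := fun r f => CharGroup.hom_ext fun m =>
    (congrArg (CharGroup.toHom f) (p.hom.map_smul (MulOpposite.op r) m)).symm }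

@[simp] lemma charDual_apply {P N : ModuleCat.{u} Rᵐᵒᵖ} (p : P ⟶ N) (f : charLeft R N)
    (x : P) : CharGroup.toHom (charDual R p f) x = CharGroup.toHom f (p x) := rfl

lemma charDual_injective {P N : ModuleCat.{u} Rᵐᵒᵖ} (p : P ⟶ N)
    (hp : Function.Surjective p) : Function.Injective (charDual R p) := by
  intro f g h
  apply CharGroup.hom_ext
  intro n
  obtain ⟨m, rfl⟩ := hp n
  exact congrArg (fun q => CharGroup.toHom q m) h

lemma charDual_surjective {A P : ModuleCat.{u} Rᵐᵒᵖ} (ι : A ⟶ P)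
    (hι : Function.Injective ι) : Function.Surjective (charDual R ι) := by
  intro g
  obtain ⟨h, hh⟩ := char_extend ι.hom.toAddMonoidHom hι (CharGroup.toHom g)
  exact ⟨CharGroup.ofHom h, CharGroup.hom_ext fun a => hh a⟩

lemma charDual_exact {A P N : ModuleCat.{u} Rᵐᵒᵖ} (ι : A ⟶ P) (p : P ⟶ N)
    (hp : Function.Surjective p) (hexx : Function.Exact ι p) :
    Function.Exact (charDual R p) (charDual R ι) := by
  intro g
  constructor
  · intro hg
    have hg' : ∀ a, CharGroup.toHom g (ι a) = 0 := fun a =>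
      congrArg (fun q => CharGroup.toHom q a) hg
    have key : ∀ z : P, p z = 0 → CharGroup.toHom g z = 0 := by
      intro z hz
      obtain ⟨a, rfl⟩ := (hexx z).mp hz
      exact hg' a
    refine ⟨CharGroup.ofHom (AddMonoidHom.mk'
      (fun n => CharGroup.toHom g (Function.surjInv hp n)) ?_), ?_⟩
    · intro a b
      have h1 : CharGroup.toHom g (Function.surjInv hp (a + b) -
          (Function.surjInv hp a + Function.surjInv hp b)) = 0 := by
        apply key
        rw [map_sub, map_add, Function.surjInv_eq hp, Function.surjInv_eq hp,
          Function.surjInv_eq hp, sub_self]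
      rw [map_sub, map_add, sub_eq_zero] at h1
      exact h1
    · apply CharGroup.hom_ext
      intro m
      show CharGroup.toHom g (Function.surjInv hp (p m)) = CharGroup.toHom g m
      have h1 : CharGroup.toHom g (Function.surjInv hp (p m) - m) = 0 := by
        apply key
        rw [map_sub, Function.surjInv_eq hp, sub_self]
      rw [map_sub, sub_eq_zero] at h1
      exact h1
  · rintro ⟨f, rfl⟩
    apply CharGroup.hom_ext
    intro a
    show CharGroup.toHom f (p (ι a)) = 0
    rw [hexx.apply_apply_eq_zero a, map_zero]

/-- The character module of a free right module is an injective left module. -/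
lemma charFree_injective (X : Type u) :
    Module.Injective R (CharGroup (X →₀ Rᵐᵒᵖ)) := by
  refine ⟨fun X' Y' _ _ _ _ f hf g => ?_⟩
  have ext1 : ∀ i : X, ∃ hi : Y' →+ AddCircle (1 : ℚ),
      ∀ x, hi (f x) = CharGroup.toHom (g x) (Finsupp.single i 1) := by
    intro i
    refine char_extend f.toAddMonoidHom hf (AddMonoidHom.mk'
      (fun x => CharGroup.toHom (g x) (Finsupp.single i 1)) ?_)
    intro a b
    show CharGroup.toHom (g (a + b)) (Finsupp.single i 1) =
      CharGroup.toHom (g a) (Finsupp.single i 1) + CharGroup.toHom (g b) (Finsupp.single i 1)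
    rw [map_add]
    rfl
  choose hh hhs using ext1
  let hom : Y' → CharGroup (X →₀ Rᵐᵒᵖ) := fun m => CharGroup.ofHom
    (AddMonoidHom.mk' (fun v => v.sum (fun i r => hh i (r.unop • m)))
      (fun v w => Finsupp.sum_add_index' (fun i => by simp)
        (fun i r s => by rw [MulOpposite.unop_add, add_smul, map_add])))
  refine ⟨{ toFun := hom, map_add' := ?_, map_smul' := ?_ }, ?_⟩
  · intro m m'
    apply CharGroup.hom_ext
    intro v
    show v.sum (fun i r => hh i (r.unop • (m + m'))) =
      v.sum (fun i r => hh i (r.unop • m)) + v.sum (fun i r => hh i (r.unop • m'))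
    rw [← Finsupp.sum_add]
    congr 1
    ext i r
    rw [smul_add, map_add]
  · intro r m
    apply CharGroup.hom_ext
    intro v
    show v.sum (fun i s => hh i (s.unop • (r • m))) =
      (MulOpposite.op r • v).sum (fun i s => hh i (s.unop • m))
    rw [Finsupp.sum_smul_index' (fun i => by simp)]
    congr 1
    ext i s
    show hh i (s.unop • r • m) = hh i ((MulOpposite.op r • s).unop • m)
    congr 1
    show s.unop • r • m = (MulOpposite.op r * s).unop • m
    rw [MulOpposite.unop_mul, MulOpposite.unop_op, mul_smul]
  · intro x
    apply CharGroup.hom_ext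
    intro v
    induction v using Finsupp.induction with
    | zero => simp
    | single_add i r v hvi hr ih =>
      rw [map_add, map_add, ih]
      congr 1
      show (Finsupp.single i r).sum (fun j s => hh j (s.unop • f x)) =
        CharGroup.toHom (g x) (Finsupp.single i r)
      rw [Finsupp.sum_single_index (by simp)]
      have h1 : hh i (r.unop • f x) = hh i (f (r.unop • x)) :=
        congrArg (hh i) (map_smul f r.unop x).symm
      rw [h1, hhs i (r.unop • x)]
      have h2 : g (r.unop • x) = r.unop • g x := map_smul g r.unop x
      rw [h2]
      show CharGroup.toHom (g x) (MulOpposite.op r.unop • Finsupp.single i (1 : Rᵐᵒᵖ)) = _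
      rw [Finsupp.smul_single, MulOpposite.op_unop, smul_eq_mul, mul_one]

/-! ### Syzygies of right modules -/

lemma exists_syzygy (N : ModuleCat.{u} Rᵐᵒᵖ) :
    ∃ (N₁ P : ModuleCat.{u} Rᵐᵒᵖ) (ι : N₁ ⟶ P) (p : P ⟶ N),
      Module.Projective Rᵐᵒᵖ P ∧ Module.Injective R (CharGroup P) ∧
      Function.Injective ι ∧ Function.Surjective p ∧ Function.Exact ι p := by
  refine ⟨kerMod N, freeCover N, ModuleCat.ofHom (LinearMap.ker (freeProj N).hom).subtype, freeProj N,
    inferInstance, charFree_injective R (N : Type u), Subtype.val_injective,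
    freeProj_surjective N, ?_⟩
  intro y
  constructor
  · intro hy
    exact ⟨(show LinearMap.ker (freeProj N).hom from ⟨y, hy⟩), rfl⟩
  · rintro ⟨z, rfl⟩
    exact (show LinearMap.ker (freeProj N).hom from z).2

/-! ### Syzygies of special super finitely presented modules -/

lemma sfp_syzygy {R : Type u} [Ring R] {n : ℕ} {K : ModuleCat.{u} R}
    (hK : IsSpecialSFP R n K) :
    ∃ (K₁ F : ModuleCat.{u} R) (ι : K₁ ⟶ F) (p : F ⟶ K),
      Module.Projective R F ∧ Function.Injective ι ∧ Function.Surjective p ∧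
      Function.Exact ι p ∧ IsSpecialSFP R n K₁ := by
  obtain ⟨U, F, d, π, hproj, hfin, hsurj, hex0, hex, hlast⟩ := hK
  have hcr0 : ∀ x, d 0 x ∈ LinearMap.range (d 0) := fun x => LinearMap.mem_range_self _ x
  have hshift0 : Function.Surjective
      (LinearMap.codRestrict (LinearMap.range (d 0)) (d 0) hcr0) := by
    rintro ⟨z, x, rfl⟩
    exact ⟨x, Subtype.ext rfl⟩
  have hshiftex : Function.Exact (d 1)
      (LinearMap.codRestrict (LinearMap.range (d 0)) (d 0) hcr0) := by
    intro y
    have h1 : LinearMap.codRestrict (LinearMap.range (d 0)) (d 0) hcr0 y = 0 ↔ d 0 y = 0 :=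
      ⟨fun hy => congrArg Subtype.val hy, fun hy => Subtype.ext hy⟩
    exact h1.trans (hex 0 y)
  have hrange : ∀ (m : ℕ) (y : F (m + 1)),
      y ∈ Set.range (d (m + 1)) ↔
        y ∈ Set.range (LinearMap.range (d (m + 1))).subtype := by
    intro m y
    constructor
    · rintro ⟨x, rfl⟩
      exact ⟨⟨d (m + 1) x, LinearMap.mem_range_self _ x⟩, rfl⟩
    · rintro ⟨⟨z, x, rfl⟩, rfl⟩
      exact ⟨x, rfl⟩
  by_cases hn : n = 0
  · subst hn
    rw [if_pos rfl] at hlast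
    obtain ⟨e⟩ := hlast
    refine ⟨ModuleCat.of R (LinearMap.range (d 0)), F 0,
      ModuleCat.ofHom (LinearMap.range (d 0)).subtype, ModuleCat.ofHom (e.symm.toLinearMap.comp π), hproj 0,
      Subtype.val_injective, fun kk => ?_, ?_, ?_⟩
    · obtain ⟨x, hx⟩ := hsurj (e kk)
      refine ⟨x, ?_⟩
      show e.symm (π x) = kk
      rw [hx, LinearEquiv.symm_apply_apply]
    · intro y
      have h1 : e.symm.toLinearMap.comp π y = 0 ↔ π y = 0 := by
        constructor
        · intro hy
          have h3 := congrArg e hy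
          rw [map_zero] at h3
          rw [← h3]
          show π y = e (e.symm (π y))
          rw [LinearEquiv.apply_symm_apply]
        · intro hy
          show e.symm (π y) = 0
          rw [hy, map_zero]
      have h2 : y ∈ Set.range (d 0) ↔
          y ∈ Set.range (LinearMap.range (d 0)).subtype := by
        constructor
        · rintro ⟨x, rfl⟩
          exact ⟨⟨d 0 x, LinearMap.mem_range_self _ x⟩, rfl⟩
        · rintro ⟨⟨z, x, rfl⟩, rfl⟩
          exact ⟨x, rfl⟩
      exact h1.trans ((hex0 y).trans h2)
    · refine ⟨ModuleCat.of R (LinearMap.range (d 0)), fun i => F (i + 1),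
        fun i => d (i + 1), LinearMap.codRestrict _ (d 0) hcr0,
        fun i => hproj (i + 1), fun i _ => hfin (i + 1) (Nat.zero_le _),
        hshift0, hshiftex, fun i => hex (i + 1), ?_⟩
      rw [if_pos rfl]
      exact ⟨LinearEquiv.refl R _⟩
  · obtain ⟨n', rfl⟩ : ∃ n', n = n' + 1 := ⟨n - 1, by omega⟩
    rw [if_neg hn] at hlast
    obtain ⟨e⟩ := hlast
    let e2 : (K : Type u) ≃ₗ[R] LinearMap.range (d n') := e
    have hcrn : ∀ x, d n' x ∈ LinearMap.range (d n') := fun x => LinearMap.mem_range_self _ x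
    let cr : F (n' + 1) →ₗ[R] LinearMap.range (d n') :=
      LinearMap.codRestrict (LinearMap.range (d n')) (d n') hcrn
    refine ⟨ModuleCat.of R (LinearMap.range (d (n' + 1))), F (n' + 1),
      ModuleCat.ofHom (LinearMap.range (d (n' + 1))).subtype, ModuleCat.ofHom (e2.symm.toLinearMap.comp cr),
      hproj (n' + 1), Subtype.val_injective, fun kk => ?_, ?_, ?_⟩
    · obtain ⟨x, hx⟩ := (e2 kk).2
      refine ⟨x, ?_⟩
      show e2.symm (cr x) = kk
      have h2 : cr x = e2 kk := Subtype.ext hx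
      rw [h2, LinearEquiv.symm_apply_apply]
    · intro y
      have h1 : e2.symm.toLinearMap.comp cr y = 0 ↔ d n' y = 0 := by
        constructor
        · intro hy
          have h3 := congrArg e2 hy
          rw [map_zero] at h3
          have h4 : cr y = 0 := by
            rw [← h3]
            show cr y = e2 (e2.symm (cr y))
            rw [LinearEquiv.apply_symm_apply]
          exact congrArg Subtype.val h4
        · intro hy
          show e2.symm (cr y) = 0
          have h4 : cr y = 0 := Subtype.ext hy
          rw [h4, map_zero]
      exact h1.trans ((hex n' y).trans (hrange n' y))
    · refine ⟨ModuleCat.of R (LinearMap.range (d 0)), fun i => F (i + 1),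
        fun i => d (i + 1), LinearMap.codRestrict _ (d 0) hcr0,
        fun i => hproj (i + 1), fun i hi => hfin (i + 1) (by omega),
        hshift0, hshiftex, fun i => hex (i + 1), ?_⟩
      rw [if_neg hn]
      exact ⟨LinearEquiv.refl R _⟩

end WC

end WCAux

/-- if `M` is `(n,k)`-weak cotorsion then `Ext^j(N, M) = 0` for all
`j ≥ m+1` and all `N` of `n`-weak flat dimension at most `m + k`. -/
theorem stmt4 (R : Type u) [Ring R] (n k m : ℕ) (M N : ModuleCat.{u} Rᵐᵒᵖ)
    (hM : IsNKWeakCotorsion R n k M) (hN : nwfdLE R n (m + k) N)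
    (j : ℕ) (hj : m + 1 ≤ j) :
    extVanish Rᵐᵒᵖ j N M := by
  have lemB : ∀ (u : ℕ) (K : ModuleCat.{u} R), IsSpecialSFP R n K →
      extVanish R (m + k + 1 + u) K (charLeft R N) := by
    intro u
    induction u with
    | zero =>
      intro K hK
      exact hN K hK
    | succ u ih =>
      intro K hK
      obtain ⟨K₁, F, ι, p, hF, hι, hp, hexx, hK₁⟩ := WC.sfp_syzygy hK
      have h1 := WC.extVanish_succ_of_ses ι p hF hι hp hexx (m + k + 1 + u) (by omega)
        (ih K₁ hK₁)
      have harith : m + k + 1 + u + 1 = m + k + 1 + (u + 1) := by omega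
      rw [harith] at h1
      exact h1
  have main : ∀ (t : ℕ) (N' : ModuleCat.{u} Rᵐᵒᵖ),
      (∀ K : ModuleCat.{u} R, IsSpecialSFP R n K →
        extVanish R (k + 1 + t) K (charLeft R N')) →
      extVanish Rᵐᵒᵖ (t + 1) N' M := by
    intro t
    induction t with
    | zero =>
      intro N' hN'
      exact hM N' (fun K hK => hN' K hK)
    | succ t ih =>
      intro N' hN'
      obtain ⟨N₁, P, ι, p, hP, hch, hι, hp, hexx⟩ := WC.exists_syzygy R N'
      have hdual : Function.Exact (WC.charDual R p) (WC.charDual R ι) :=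
        WC.charDual_exact R ι p hp hexx
      have hN₁ : ∀ K : ModuleCat.{u} R, IsSpecialSFP R n K →
          extVanish R (k + 1 + t) K (charLeft R N₁) := by
        intro K hK
        have h2 := hN' K hK
        have harith : k + 1 + (t + 1) = (k + t) + 2 := by omega
        rw [harith] at h2
        have h3 := WC.extVanish_pred_of_inj_ses (K := K) (WC.charDual R p)
          (WC.charDual R ι) hch (WC.charDual_injective R p hp)
          (WC.charDual_surjective R ι hι) hdual (k + t) h2
        have harith2 : (k + t) + 1 = k + 1 + t := by omega
        rw [harith2] at h3
        exact h3
      have h4 := ih N₁ hN₁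
      exact WC.extVanish_succ_of_ses ι p hP hι hp hexx (t + 1) (by omega) h4
  obtain ⟨t, rfl⟩ : ∃ t, j = t + 1 := ⟨j - 1, by omega⟩
  apply main t N
  intro K hK
  have h6 := lemB (t - m) K hK
  have harith3 : m + k + 1 + (t - m) = k + 1 + t := by omega
  rw [harith3] at h6
  exact h6
end

section
/- If M is the cokernel of a WI^n_k(R)-preenvelope X → F of a left R-module X with F flat, then Tor^R_1(A, M) = 0 for every right R-module A of n-weak flat dimension at most k. -/
/-!
Common definitions for formalizing "(n,k)-weak cotorsion modules" over an arbitrary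
(not necessarily commutative) ring `R`.  Left `R`-modules are objects of
`ModuleCat R`, right `R`-modules are objects of `ModuleCat Rᵐᵒᵖ`.

Since Mathlib does not provide `Tor` of a right module with a left module over a
noncommutative ring, we encode the vanishing of `Tor_i^R(N, M)` (for `N` a right
module and `M` a left module) by the equivalent condition
`Ext^i_{Rᵐᵒᵖ}(N, M⋆) = 0`, where `M⋆ = Hom_ℤ(M, ℚ/ℤ)` is the character module
(a right module).  This is equivalent because `ℚ/ℤ` is an injective cogenerator:
`Ext^i_{Rᵐᵒᵖ}(N, M⋆) ≅ (Tor_i^R(N, M))⋆`, and an abelian group vanishes iff its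
character group does.
-/

open CategoryTheory

universe u

/-!
Write `J = A⋆`. In the character-module encoding, `nwfdLE R n k A` is literally
`nwidLE R n k J` and `Tor_1(A, M) = 0` is `Ext^1(M, J) = 0`. So it suffices to show
`Ext^1(M, J) = 0` whenever `X → F → M → 0` is exact, `Ext^1(F, J) = 0`, and every map `X → J`
extends along `f`; we show that every extension `0 → J → Z → M → 0` splits. Since
`Ext^1(F, J) = 0`, `g` lifts to `s₁ : F → Z`. The composite `s₁ ∘ f` lands in `J`, so it extends
to some `h : F → J`. Then `s₁ - h` kills the image of `f` and descends to a section `M → Z`.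

Both translations between `Ext^1` and extensions go through the first syzygy `Ω` of a projective
resolution `P₀ → M`. `Ext^1(M, J) = 0` if and only if every map `Ω → J` extends to `P₀`, and the
pushout of `Ω ↪ P₀` along such a map is the extension that has to split.
-/

namespace LinearMap

variable {S A B C : Type*} [Ring S] [AddCommGroup A] [AddCommGroup B] [AddCommGroup C]
  [Module S A] [Module S B] [Module S C]

theorem exists_comp_eq_of_ker_le (q : A →ₗ[S] B) (t : A →ₗ[S] C) (hq : Function.Surjective q)
    (h : ker q ≤ ker t) : ∃ s : B →ₗ[S] C, s ∘ₗ q = t :=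
  ⟨(ker q).liftQ t h ∘ₗ (q.quotKerEquivOfSurjective hq).symm.toLinearMap, by
    ext a
    simp⟩

theorem exists_comp_eq_of_range_le (ι : B →ₗ[S] C) (t : A →ₗ[S] C) (hι : Function.Injective ι)
    (h : range t ≤ range ι) : ∃ v : A →ₗ[S] B, ι ∘ₗ v = t :=
  ⟨(LinearEquiv.ofInjective ι hι).symm.toLinearMap ∘ₗ Submodule.inclusion h ∘ₗ t.rangeRestrict,
    by
      ext a
      simp⟩

end LinearMap

section KerPushout

variable {S P M J : Type*} [Ring S] [AddCommGroup P] [AddCommGroup M] [AddCommGroup J]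
  [Module S P] [Module S M] [Module S J] (π : P →ₗ[S] M) (l : LinearMap.ker π →ₗ[S] J)

def KerPushout.rel : Submodule S (P × J) :=
  LinearMap.range ((LinearMap.ker π).subtype.prod (-l))

/-- The pushout of `ker π ↪ P` along `l`; for surjective `π` it is an extension of `M` by `J`. -/
abbrev KerPushout : Type _ := (P × J) ⧸ KerPushout.rel π l

namespace KerPushout

def inl : P →ₗ[S] KerPushout π l := (rel π l).mkQ ∘ₗ LinearMap.inl S P J

def inr : J →ₗ[S] KerPushout π l := (rel π l).mkQ ∘ₗ LinearMap.inr S P J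

def desc : KerPushout π l →ₗ[S] M :=
  (rel π l).liftQ (π ∘ₗ LinearMap.fst S P J) <| by
    rintro _ ⟨k, rfl⟩
    exact k.2

theorem inl_apply_of_mem_ker (k : LinearMap.ker π) : inl π l k = inr π l (l k) := by
  refine (Submodule.Quotient.eq _).2 ⟨k, ?_⟩
  simp

theorem desc_comp_inl : desc π l ∘ₗ inl π l = π := rfl

theorem inr_injective : Function.Injective (inr π l) := by
  refine (injective_iff_map_eq_zero _).2 fun j hj => ?_
  obtain ⟨k, hk⟩ := (Submodule.Quotient.mk_eq_zero _).1 hj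
  obtain rfl : k = 0 := Subtype.ext congr(Prod.fst $hk)
  simpa using congr(Prod.snd $hk).symm

theorem desc_surjective (hπ : Function.Surjective π) : Function.Surjective (desc π l) :=
  fun m => (hπ m).elim fun x hx => ⟨inl π l x, hx⟩

theorem exact_inr_desc : Function.Exact (inr π l) (desc π l) := by
  intro y
  constructor
  · obtain ⟨⟨x, j⟩, rfl⟩ := Submodule.mkQ_surjective _ y
    intro hx
    refine ⟨j + l ⟨x, hx⟩, (Submodule.Quotient.eq _).2 ⟨-⟨x, hx⟩, ?_⟩⟩
    simp
  · rintro ⟨j, rfl⟩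
    simp [desc, inr]

end KerPushout

end KerPushout

noncomputable section

namespace CategoryTheory.ProjectiveResolution

variable {S : Type u} [Ring S] {M : ModuleCat.{u} S} (P : ProjectiveResolution M)

instance (n : ℕ) : Module.Projective S (P.complex.X n) :=
  (IsProjective.iff_projective _).2 (P.projective n)

abbrev augmentation : P.complex.X 0 →ₗ[S] M := (P.π.f 0).hom

theorem augmentation_surjective : Function.Surjective P.augmentation :=
  (ModuleCat.epi_iff_surjective _).1 inferInstance

abbrev syzygy : Submodule S (P.complex.X 0) := LinearMap.ker P.augmentation

def toSyzygy : P.complex.X 1 →ₗ[S] P.syzygy :=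
  LinearMap.codRestrict _ (P.complex.d 1 0).hom fun x =>
    congr(ModuleCat.Hom.hom $(P.complex_d_comp_π_f_zero) x)

theorem subtype_comp_toSyzygy : P.syzygy.subtype ∘ₗ P.toSyzygy = (P.complex.d 1 0).hom := rfl

theorem toSyzygy_surjective : Function.Surjective P.toSyzygy := by
  rintro ⟨z, hz⟩
  obtain ⟨y, hy⟩ := (ShortComplex.moduleCat_exact_iff _).1 P.exact₀ z hz
  exact ⟨y, Subtype.ext hy⟩

theorem exact_d_toSyzygy : Function.Exact (P.complex.d 2 1).hom P.toSyzygy := by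
  intro y
  rw [← (ShortComplex.ShortExact.moduleCat_exact_iff_function_exact _).1 (P.exact_succ 0) y,
    Subtype.ext_iff]
  rfl

end CategoryTheory.ProjectiveResolution

end

section ExtOne

variable {S : Type u} [Ring S]

theorem extVanish_one_iff_exact {M : ModuleCat.{u} S} (P : ProjectiveResolution M)
    (J : ModuleCat.{u} S) :
    extVanish S 1 M J ↔ ((P.complex.linearYonedaObj ℤ J).sc' 0 1 2).Exact := by
  rw [← HomologicalComplex.exactAt_iff' _ 0 1 2 (by simp) (by simp),
    HomologicalComplex.exactAt_iff_isZero_homology, ← (P.isoExt 1 J).isZero_iff,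
    ModuleCat.isZero_iff_subsingleton]
  rfl

theorem extVanish_one_iff_forall_exists_extend {M : ModuleCat.{u} S}
    (P : ProjectiveResolution M) (J : ModuleCat.{u} S) :
    extVanish S 1 M J ↔
      ∀ l : P.syzygy →ₗ[S] J, ∃ L : P.complex.X 0 →ₗ[S] J, L ∘ₗ P.syzygy.subtype = l := by
  rw [extVanish_one_iff_exact P J, ShortComplex.moduleCat_exact_iff]
  constructor
  · intro h l
    obtain ⟨L, hL⟩ := h (ModuleCat.ofHom (l ∘ₗ P.toSyzygy)) (by
      change P.complex.d 2 1 ≫ ModuleCat.ofHom (l ∘ₗ P.toSyzygy) = 0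
      ext x
      exact (congrArg l (P.exact_d_toSyzygy.apply_apply_eq_zero x)).trans (map_zero l))
    refine ⟨L.hom, (LinearMap.cancel_right P.toSyzygy_surjective).1 ?_⟩
    change P.complex.d 1 0 ≫ L = ModuleCat.ofHom (l ∘ₗ P.toSyzygy) at hL
    rw [LinearMap.comp_assoc, P.subtype_comp_toSyzygy]
    exact congrArg ModuleCat.Hom.hom hL
  · intro h (φ : P.complex.X 1 ⟶ J) hφ
    change P.complex.d 2 1 ≫ φ = 0 at hφ
    obtain ⟨l, hl⟩ := LinearMap.exists_comp_eq_of_ker_le P.toSyzygy φ.hom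
      P.toSyzygy_surjective fun x hx => by
        obtain ⟨w, rfl⟩ := (P.exact_d_toSyzygy x).1 hx
        exact congr(ModuleCat.Hom.hom $hφ w)
    obtain ⟨L, hL⟩ := h l
    refine ⟨ModuleCat.ofHom L, ?_⟩
    change P.complex.d 1 0 ≫ ModuleCat.ofHom L = φ
    ext x
    rw [← hl, ← hL]
    rfl

theorem exists_comp_eq_of_extVanish_one {F M J : ModuleCat.{u} S} (hFJ : extVanish S 1 F J)
    {Z : Type*} [AddCommGroup Z] [Module S Z] {ι : J →ₗ[S] Z} {p : Z →ₗ[S] M}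
    (hι : Function.Injective ι) (hp : Function.Surjective p) (hιp : Function.Exact ι p)
    (g : F →ₗ[S] M) : ∃ s : F →ₗ[S] Z, p ∘ₗ s = g := by
  let P := ProjectiveResolution.of F
  obtain ⟨τ, hτ⟩ := Module.projective_lifting_property p (g ∘ₗ P.augmentation) hp
  obtain ⟨l, hl⟩ := LinearMap.exists_comp_eq_of_range_le ι (τ ∘ₗ P.syzygy.subtype) hι (by
    rintro _ ⟨⟨x, hx⟩, rfl⟩
    refine (hιp _).1 ?_
    rw [LinearMap.comp_apply, Submodule.subtype_apply, ← LinearMap.comp_apply p τ, hτ,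
      LinearMap.comp_apply]
    exact (congrArg g hx).trans (map_zero g))
  obtain ⟨L, hL⟩ := (extVanish_one_iff_forall_exists_extend P J).1 hFJ l
  have hιL : ∀ x (hx : x ∈ P.syzygy), ι (L x) = τ x := fun x hx =>
    (congrArg ι (LinearMap.congr_fun hL ⟨x, hx⟩)).trans (LinearMap.congr_fun hl ⟨x, hx⟩)
  obtain ⟨s, hs⟩ := LinearMap.exists_comp_eq_of_ker_le P.augmentation (τ - ι ∘ₗ L)
    P.augmentation_surjective fun x hx => by simp [hιL x hx]
  refine ⟨s, (LinearMap.cancel_right P.augmentation_surjective).1 ?_⟩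
  rw [LinearMap.comp_assoc, hs, LinearMap.comp_sub, hτ, ← LinearMap.comp_assoc,
    hιp.linearMap_comp_eq_zero, LinearMap.zero_comp, sub_zero]

open KerPushout in
theorem extVanish_one_of_forall_exists_section {M J : ModuleCat.{u} S}
    (h : ∀ (Z : Type u) [AddCommGroup Z] [Module S Z] (ι : J →ₗ[S] Z) (p : Z →ₗ[S] M),
      Function.Injective ι → Function.Surjective p → Function.Exact ι p →
        ∃ s : M →ₗ[S] Z, p ∘ₗ s = LinearMap.id) :
    extVanish S 1 M J := by
  let P := ProjectiveResolution.of M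
  refine (extVanish_one_iff_forall_exists_extend P J).2 fun l => ?_
  obtain ⟨s, hs⟩ := h _ (inr P.augmentation l) (desc P.augmentation l)
    (inr_injective _ l) (desc_surjective _ l P.augmentation_surjective) (exact_inr_desc _ l)
  obtain ⟨L, hL⟩ := LinearMap.exists_comp_eq_of_range_le (inr P.augmentation l)
    (inl P.augmentation l - s ∘ₗ P.augmentation) (inr_injective _ l) (by
      rintro _ ⟨x, rfl⟩
      refine (exact_inr_desc _ l _).1 ?_
      rw [LinearMap.sub_apply, map_sub, ← LinearMap.comp_apply (desc _ l), desc_comp_inl,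
        LinearMap.comp_apply, ← LinearMap.comp_apply _ s, hs, LinearMap.id_apply, sub_self])
  refine ⟨L, LinearMap.ext fun k => inr_injective _ l ?_⟩
  have hk : P.augmentation k = 0 := k.2
  rw [LinearMap.comp_apply, Submodule.subtype_apply, ← LinearMap.comp_apply _ L, hL,
    LinearMap.sub_apply, LinearMap.comp_apply, hk, map_zero, sub_zero, inl_apply_of_mem_ker]

theorem extVanish_one_of_exact_of_extVanish_one {X : Type*} [AddCommGroup X] [Module S X]
    {F M J : ModuleCat.{u} S} (hFJ : extVanish S 1 F J) {f : X →ₗ[S] F} {g : F →ₗ[S] M}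
    (hg : Function.Surjective g) (hfg : Function.Exact f g)
    (hf : ∀ v : X →ₗ[S] J, ∃ h : F →ₗ[S] J, h ∘ₗ f = v) :
    extVanish S 1 M J := by
  refine extVanish_one_of_forall_exists_section fun Z _ _ ι p hι hp hιp => ?_
  obtain ⟨s₁, hs₁⟩ := exists_comp_eq_of_extVanish_one hFJ hι hp hιp g
  obtain ⟨v, hv⟩ := LinearMap.exists_comp_eq_of_range_le ι (s₁ ∘ₗ f) hι (by
    rintro _ ⟨x, rfl⟩
    refine (hιp _).1 ?_
    rw [LinearMap.comp_apply, ← LinearMap.comp_apply p, hs₁, hfg.apply_apply_eq_zero])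
  obtain ⟨h, hh⟩ := hf v
  have hf₀ : (s₁ - ι ∘ₗ h) ∘ₗ f = 0 := by
    rw [LinearMap.sub_comp, LinearMap.comp_assoc, hh, hv, sub_self]
  obtain ⟨s, hs⟩ := LinearMap.exists_comp_eq_of_ker_le g (s₁ - ι ∘ₗ h) hg fun y hy => by
    obtain ⟨x, rfl⟩ := (hfg y).1 hy
    exact LinearMap.congr_fun hf₀ x
  refine ⟨s, (LinearMap.cancel_right hg).1 ?_⟩
  rw [LinearMap.comp_assoc, hs, LinearMap.comp_sub, hs₁, ← LinearMap.comp_assoc,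
    hιp.linearMap_comp_eq_zero, LinearMap.zero_comp, sub_zero, LinearMap.id_comp]

end ExtOne

/-- if `M` is the cokernel of a `WI^n_k(R)`-preenvelope `X → F` with `F`
flat, then `Tor_1(A, M) = 0` for every right module `A` of `n`-weak flat dimension
at most `k`. -/
theorem stmt7 (R : Type u) [Ring R] (n k : ℕ) (X F M : ModuleCat.{u} R)
    (hF : IsFlatModule R F) (f : X →ₗ[R] F)
    (henv : IsPreenvelope R (nwidLE R n k) X F f)
    (g : F →ₗ[R] M) (hg : Function.Surjective g) (hfg : Function.Exact f g) :
    ∀ A : ModuleCat.{u} Rᵐᵒᵖ, nwfdLE R n k A → torVanish R 1 A M := by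
  intro A hA
  exact extVanish_one_of_exact_of_extVanish_one (hF A) hg hfg (henv.2 (charLeft R A) hA)
end

section
/- If the left n-super finitely presented global dimension of R is finite, then it equals the n-weak injective dimension of R as a left R-module; in particular, l.n.sp.gldim(R) ≤ k if and only if Ext^{k+1}_R(K, R) = 0 for every special super finitely presented left R-module K (assuming l.n.sp.gldim(R) < ∞). -/
/-!
Common definitions for formalizing "(n,k)-weak cotorsion modules" over an arbitrary
(not necessarily commutative) ring `R`.  Left `R`-modules are objects of
`ModuleCat R`, right `R`-modules are objects of `ModuleCat Rᵐᵒᵖ`.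

Since Mathlib does not provide `Tor` of a right module with a left module over a
noncommutative ring, we encode the vanishing of `Tor_i^R(N, M)` (for `N` a right
module and `M` a left module) by the equivalent condition
`Ext^i_{Rᵐᵒᵖ}(N, M⋆) = 0`, where `M⋆ = Hom_ℤ(M, ℚ/ℤ)` is the character module
(a right module).  This is equivalent because `ℚ/ℤ` is an injective cogenerator:
`Ext^i_{Rᵐᵒᵖ}(N, M⋆) ≅ (Tor_i^R(N, M))⋆`, and an abelian group vanishes iff its
character group does.
-/

open CategoryTheory

universe u

/-!
Every special super finitely presented module `K` has a projective resolution by finitely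
generated modules, and its syzygies are again special super finitely presented, so
`Ext^(j+1)(K, R) = 0` for one `j` propagates to all larger degrees. Because the resolution is
finitely generated, a cocycle with values in a free module `R^(M)` only sees finitely many
coordinates, so `Ext^(j+1)(K, R) = 0` gives `Ext^(j+1)(K, R^(M)) = 0`. If moreover `pd K ≤ j + 1`,
the long exact sequence of `0 → L → R^(M) → M → 0` squeezes `Ext^(j+1)(K, M)` between two zeros,
hence `pd K ≤ j`. Starting from the finite bound on `l.n.sp.gldim(R)`, this descends to `k`.
-/

structure LinearProjectiveResolution (R : Type u) [Ring R] (K : ModuleCat.{u} R) where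
  P : ℕ → ModuleCat.{u} R
  d : ∀ i, P (i + 1) →ₗ[R] P i
  ε : P 0 →ₗ[R] K
  projective : ∀ i, Module.Projective R (P i)
  surjective_ε : Function.Surjective ε
  exact_zero : Function.Exact (d 0) ε
  exact : ∀ i, Function.Exact (d (i + 1)) (d i)

namespace LinearProjectiveResolution

variable {R : Type u} [Ring R] {K : ModuleCat.{u} R} (r : LinearProjectiveResolution R K)

def complex : ChainComplex (ModuleCat.{u} R) ℕ :=
  ChainComplex.of r.P (fun i => ModuleCat.ofHom (r.d i))
    (fun i => ModuleCat.hom_ext (LinearMap.ext (r.exact i).apply_apply_eq_zero))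

@[simp]
lemma complex_d_succ (i : ℕ) : r.complex.d (i + 1) i = ModuleCat.ofHom (r.d i) := by
  simp [complex, ChainComplex.of.d]

noncomputable def toProjectiveResolution : ProjectiveResolution K where
  complex := r.complex
  projective i := (IsProjective.iff_projective (P := r.P i)).1 (r.projective i)
  π := (ChainComplex.toSingle₀Equiv _ _).symm ⟨ModuleCat.ofHom r.ε, by
    rw [r.complex_d_succ 0]
    exact ModuleCat.hom_ext (LinearMap.ext r.exact_zero.apply_apply_eq_zero)⟩
  quasiIso := ⟨fun i => by
    cases i with
    | zero =>
      rw [ChainComplex.quasiIsoAt₀_iff, ShortComplex.quasiIso_iff_of_zeros' _ rfl rfl rfl]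
      refine (ShortComplex.exact_and_epi_g_iff_of_iso
        (ShortComplex.isoMk (Iso.refl _) (Iso.refl _) (Iso.refl _) ?_ ?_ :
          _ ≅ ShortComplex.mk (ModuleCat.ofHom (r.d 0)) (ModuleCat.ofHom r.ε)
            (ModuleCat.hom_ext (LinearMap.ext r.exact_zero.apply_apply_eq_zero)))).2
        ⟨?_, (ModuleCat.epi_iff_surjective _).2 r.surjective_ε⟩
      · simp
      · simp
      · exact (ShortComplex.moduleCat_exact_iff _).2 fun x hx => (r.exact_zero x).1 hx
    | succ i =>
      rw [quasiIsoAt_iff_exactAt' _ _ (ChainComplex.exactAt_succ_single_obj _ _),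
        HomologicalComplex.exactAt_iff' _ (i + 2) (i + 1) i (by simp) (by simp),
        ShortComplex.moduleCat_exact_iff]
      intro x hx
      obtain ⟨y, hy⟩ := (r.exact i x).1 (by
        simp only [HomologicalComplex.shortComplexFunctor'_obj_g, complex_d_succ] at hx
        exact hx)
      exact ⟨y, by
        simp only [HomologicalComplex.shortComplexFunctor'_obj_f, complex_d_succ]
        exact hy⟩⟩

lemma linearYonedaObj_d_ofHom (M : ModuleCat.{u} R) (i : ℕ) (f : r.P i →ₗ[R] M) :
    (r.toProjectiveResolution.complex.linearYonedaObj ℤ M).d i (i + 1) (ModuleCat.ofHom f) =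
      ModuleCat.ofHom (f ∘ₗ r.d i) := by
  rw [ChainComplex.linearYonedaObj_d]
  change r.complex.d (i + 1) i ≫ (ModuleCat.ofHom f : r.complex.X i ⟶ M) = _
  rw [r.complex_d_succ i]
  rfl

lemma extVanish_succ_iff (j : ℕ) (M : ModuleCat.{u} R) :
    extVanish R (j + 1) K M ↔
      ∀ f : r.P (j + 1) →ₗ[R] M, f ∘ₗ r.d (j + 1) = 0 →
        ∃ g : r.P j →ₗ[R] M, f = g ∘ₗ r.d j := by
  let C := r.toProjectiveResolution.complex.linearYonedaObj ℤ M
  have hExt : extVanish R (j + 1) K M ↔ C.ExactAt (j + 1) := by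
    rw [HomologicalComplex.exactAt_iff_isZero_homology, ModuleCat.isZero_iff_subsingleton]
    exact ((forget _).mapIso
      (r.toProjectiveResolution.isoExt (R := ℤ) (j + 1) M)).toEquiv.subsingleton_congr
  rw [hExt, HomologicalComplex.exactAt_iff' _ j (j + 1) (j + 1 + 1) (by simp) (by simp),
    ShortComplex.moduleCat_exact_iff]
  constructor
  · intro hC f hf
    obtain ⟨g, hg⟩ := hC (ModuleCat.ofHom f) (by
      change C.d (j + 1) (j + 1 + 1) (ModuleCat.ofHom f) = 0
      rw [r.linearYonedaObj_d_ofHom M (j + 1) f, hf]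
      rfl)
    have hg' : C.d j (j + 1) g = ModuleCat.ofHom f := hg
    exact ⟨g.hom, (congrArg ModuleCat.Hom.hom
      ((r.linearYonedaObj_d_ofHom M j g.hom).symm.trans hg')).symm⟩
  · intro hc f hf
    obtain ⟨g, hg⟩ := hc f.hom (congrArg ModuleCat.Hom.hom
      ((r.linearYonedaObj_d_ofHom M (j + 1) f.hom).symm.trans hf))
    refine ⟨ModuleCat.ofHom g, ?_⟩
    change C.d j (j + 1) (ModuleCat.ofHom g) = f
    rw [r.linearYonedaObj_d_ofHom M j g, ← hg]
    rfl

def drop (m : ℕ) : LinearProjectiveResolution R (ModuleCat.of R (LinearMap.range (r.d m))) where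
  P i := r.P (m + 1 + i)
  d i := r.d (m + 1 + i)
  ε := (r.d m).rangeRestrict
  projective i := r.projective (m + 1 + i)
  surjective_ε := (r.d m).surjective_rangeRestrict
  exact_zero y := (SetLike.ext_iff.1 (r.d m).ker_rangeRestrict y).trans (r.exact m y)
  exact i := r.exact (m + 1 + i)

def transport {K' : ModuleCat.{u} R} (e : K ≃ₗ[R] K') : LinearProjectiveResolution R K' where
  P := r.P
  d := r.d
  ε := e.toLinearMap ∘ₗ r.ε
  projective := r.projective
  surjective_ε := e.surjective.comp r.surjective_ε
  exact_zero y := e.map_eq_zero_iff.trans (r.exact_zero y)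
  exact := r.exact

lemma extVanish_range_d_iff (m j : ℕ) (M : ModuleCat.{u} R) :
    extVanish R (j + 1) (ModuleCat.of R (LinearMap.range (r.d m))) M ↔
      extVanish R (m + 1 + j + 1) K M :=
  ((r.drop m).extVanish_succ_iff j M).trans (r.extVanish_succ_iff (m + 1 + j) M).symm

/-- A cocycle into `ι →₀ N` on the finitely generated `P_(j+1)` only involves finitely many
coordinates, each of which is a coboundary. -/
lemma extVanish_finsupp {j : ℕ} [Module.Finite R (r.P (j + 1))] {N : Type u} [AddCommGroup N]
    [Module R N] (hN : extVanish R (j + 1) K (ModuleCat.of R N)) (ι : Type u) :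
    extVanish R (j + 1) K (ModuleCat.of R (ι →₀ N)) := by
  classical
  rw [r.extVanish_succ_iff] at hN ⊢
  intro v hv
  obtain ⟨s, hs⟩ := Module.Finite.fg_top (R := R) (M := r.P (j + 1))
  set T := s.biUnion fun p => (v p).support
  have hvT : v = ∑ x ∈ T, Finsupp.lsingle x ∘ₗ Finsupp.lapply x ∘ₗ v := by
    refine LinearMap.ext_on hs fun p hp => Finsupp.ext fun y => ?_
    by_cases hy : y ∈ T
    · simp [Finsupp.finsetSum_apply, Finsupp.single_apply, hy]
    · have : v p y = 0 := Finsupp.notMem_support_iff.1 fun h =>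
        hy (Finset.mem_biUnion.2 ⟨p, hp, h⟩)
      simp [Finsupp.finsetSum_apply, Finsupp.single_apply, hy, this]
  have hcoord : ∀ x, ∃ g : r.P j →ₗ[R] N, Finsupp.lapply x ∘ₗ v = g ∘ₗ r.d j := fun x =>
    hN _ (by rw [LinearMap.comp_assoc, hv, LinearMap.comp_zero])
  choose g hg using hcoord
  refine ⟨∑ x ∈ T, Finsupp.lsingle x ∘ₗ g x, ?_⟩
  rw [hvT]
  ext p
  simp [hg]

/-- The segment `Ext^(j+1)(K, F) → Ext^(j+1)(K, M) → Ext^(j+2)(K, ker p)` of the long exact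
sequence of `0 → ker p → F → M → 0`. -/
lemma extVanish_of_surjective (r : LinearProjectiveResolution R K) {j : ℕ}
    {F M : ModuleCat.{u} R} (p : F →ₗ[R] M) (hp : Function.Surjective p) (hF : extVanish R (j + 1) K F)
    (hker : extVanish R (j + 2) K (ModuleCat.of R (LinearMap.ker p))) :
    extVanish R (j + 1) K M := by
  rw [r.extVanish_succ_iff] at hF ⊢
  intro f hf
  have := r.projective (j + 1)
  obtain ⟨f', hf'⟩ := Module.projective_lifting_property p f hp
  have hmem : ∀ x, f' (r.d (j + 1) x) ∈ LinearMap.ker p := fun x => by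
    rw [LinearMap.mem_ker, ← LinearMap.comp_apply p f', hf', ← LinearMap.comp_apply, hf,
      LinearMap.zero_apply]
  obtain ⟨u, hu⟩ := (r.extVanish_succ_iff (j + 1) _).1 hker
    (LinearMap.codRestrict _ (f' ∘ₗ r.d (j + 1)) hmem) (by
      ext x
      simp [(r.exact (j + 1)).apply_apply_eq_zero])
  have hu' : ∀ x, ((LinearMap.ker p).subtype ∘ₗ u) (r.d (j + 1) x) = f' (r.d (j + 1) x) :=
    fun x => congrArg Subtype.val (LinearMap.congr_fun hu x).symm
  obtain ⟨w, hw⟩ := hF (f' - (LinearMap.ker p).subtype ∘ₗ u) (by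
    ext x
    simp [hu'])
  refine ⟨p ∘ₗ w, LinearMap.ext fun x => ?_⟩
  calc f x = p (f' x) := (LinearMap.congr_fun hf' x).symm
    _ = p ((f' - (LinearMap.ker p).subtype ∘ₗ u) x) := by simp
    _ = p (w (r.d j x)) := by rw [hw]; rfl

lemma pdLE_of_extVanish_self {j : ℕ} [Module.Finite R (r.P (j + 1))] (hpd : pdLE R (j + 1) K)
    (hR : extVanish R (j + 1) K (ModuleCat.of R R)) : pdLE R j K := fun M =>
  r.extVanish_of_surjective (F := ModuleCat.of R (M →₀ R)) (Finsupp.linearCombination R id)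
    (Finsupp.linearCombination_surjective R Function.surjective_id) (r.extVanish_finsupp hR M)
    (hpd _)

end LinearProjectiveResolution

section SpecialSuperFinitelyPresented

variable {R : Type u} [Ring R] {n : ℕ}

lemma LinearProjectiveResolution.isSpecialSFP_range_d {U : ModuleCat.{u} R}
    (r : LinearProjectiveResolution R U) (hfin : ∀ i, n ≤ i → Module.Finite R (r.P i)) :
    IsSpecialSFP R n (ModuleCat.of R (LinearMap.range (r.d n))) := by
  refine ⟨ModuleCat.of R (LinearMap.range (r.d 0)), fun i => r.P (i + 1), fun i => r.d (i + 1),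
    (r.d 0).rangeRestrict, fun i => r.projective (i + 1), fun i hi => hfin (i + 1) (by omega),
    (r.d 0).surjective_rangeRestrict,
    fun y => (SetLike.ext_iff.1 (r.d 0).ker_rangeRestrict y).trans (r.exact 0 y),
    fun i => r.exact (i + 1), ?_⟩
  cases n <;> exact ⟨LinearEquiv.refl R _⟩

lemma IsSpecialSFP.exists_resolution {K : ModuleCat.{u} R} (hK : IsSpecialSFP R n K) :
    ∃ r : LinearProjectiveResolution R K, (∀ i, Module.Finite R (r.P i)) ∧
      IsSpecialSFP R n (ModuleCat.of R (LinearMap.range (r.d 0))) := by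
  obtain ⟨U, F, d, π, hproj, hfin, hπ, hexact₀, hexact, hK⟩ := hK
  let r : LinearProjectiveResolution R U := ⟨F, d, π, hproj, hπ, hexact₀, hexact⟩
  have hsyz := r.isSpecialSFP_range_d hfin
  cases n with
  | zero =>
    obtain ⟨e⟩ : Nonempty (K ≃ₗ[R] U) := by simpa using hK
    exact ⟨r.transport e.symm, fun i => hfin i i.zero_le, hsyz⟩
  | succ m =>
    obtain ⟨e⟩ : Nonempty (K ≃ₗ[R] LinearMap.range (d m)) := by simpa using hK
    exact ⟨(r.drop m).transport e.symm, fun i => hfin _ (by omega), hsyz⟩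

lemma nwidLE_succ {k : ℕ} {M : ModuleCat.{u} R} (h : nwidLE R n k M) : nwidLE R n (k + 1) M := by
  intro K hK
  obtain ⟨r, -, hsyz⟩ := hK.exists_resolution
  have := (r.extVanish_range_d_iff 0 k M).1 (h _ hsyz)
  rwa [show 0 + 1 + k + 1 = k + 1 + 1 by omega] at this

lemma nwidLE_mono {a b : ℕ} {M : ModuleCat.{u} R} (h : nwidLE R n a M) (hab : a ≤ b) :
    nwidLE R n b M := by
  induction b, hab using Nat.le_induction with
  | base => exact h
  | succ b _ ih => exact nwidLE_succ ih

lemma lnspGldimLE_iff_forall_nwidLE {k : ℕ} :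
    lnspGldimLE R n k ↔ ∀ M : ModuleCat.{u} R, nwidLE R n k M :=
  ⟨fun h M K hK => h K hK M, fun h K hK M => h M K hK⟩

lemma lnspGldimLE_mono {a b : ℕ} (h : lnspGldimLE R n a) (hab : a ≤ b) : lnspGldimLE R n b :=
  lnspGldimLE_iff_forall_nwidLE.2 fun M => nwidLE_mono (lnspGldimLE_iff_forall_nwidLE.1 h M) hab

lemma lnspGldimLE_of_succ {k : ℕ} (h : lnspGldimLE R n (k + 1))
    (hR : nwidLE R n k (ModuleCat.of R R)) : lnspGldimLE R n k := by
  intro K hK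
  obtain ⟨r, hfin, -⟩ := hK.exists_resolution
  have := hfin (k + 1)
  exact r.pdLE_of_extVanish_self (h K hK) (hR K hK)

end SpecialSuperFinitelyPresented

/-- if `l.n.sp.gldim(R)` is finite, it equals `n-wid(_R R)`; i.e. for
every `k`, `l.n.sp.gldim(R) ≤ k` iff `Ext^{k+1}(K, R) = 0` for every special super
finitely presented left module `K`. -/
theorem stmt13 (R : Type u) [Ring R] (n : ℕ)
    (h : ∃ k, lnspGldimLE R n k) :
    ∀ k, lnspGldimLE R n k ↔ nwidLE R n k (ModuleCat.of R R) := by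
  obtain ⟨k₀, hk₀⟩ := h
  intro k
  refine ⟨fun hk K hK => hk K hK _, fun hR => ?_⟩
  have descend : ∀ i, lnspGldimLE R n (k + i) → lnspGldimLE R n k := by
    intro i
    induction i with
    | zero => exact id
    | succ i ih => exact fun hi => ih (lnspGldimLE_of_succ hi (nwidLE_mono hR (by omega)))
  exact descend k₀ (lnspGldimLE_mono hk₀ (by omega))
end

section
/- If l.n.sp.gldim(R) ≤ k, then for all m ≥ 0, all i ≥ m, every (n, k+m)-weak cotorsion right R-module M and every (n,k)-weak cotorsion right R-module N, one has Ext^{1+i}_R(M, N) = 0. -/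
/-!
Common definitions for formalizing "(n,k)-weak cotorsion modules" over an arbitrary
(not necessarily commutative) ring `R`.  Left `R`-modules are objects of
`ModuleCat R`, right `R`-modules are objects of `ModuleCat Rᵐᵒᵖ`.

Since Mathlib does not provide `Tor` of a right module with a left module over a
noncommutative ring, we encode the vanishing of `Tor_i^R(N, M)` (for `N` a right
module and `M` a left module) by the equivalent condition
`Ext^i_{Rᵐᵒᵖ}(N, M⋆) = 0`, where `M⋆ = Hom_ℤ(M, ℚ/ℤ)` is the character module
(a right module).  This is equivalent because `ℚ/ℤ` is an injective cogenerator: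
`Ext^i_{Rᵐᵒᵖ}(N, M⋆) ≅ (Tor_i^R(N, M))⋆`, and an abelian group vanishes iff its
character group does.
-/

open CategoryTheory

universe u

/-!
Under `l.n.sp.gldim(R) ≤ k` every right module `X` has `n`-weak flat dimension at most `k`:
with the character-module encoding, `Tor_{k+1}(X, K)` is `Ext^{k+1}(K, X⋆)`, which vanishes since
`pd K ≤ k`. Hence an `(n,k)`-weak cotorsion `N` satisfies `Ext¹(-, N) = 0`, so it is injective:
the sequence `0 → N → E → E/N → 0` with `E` injective splits, because `Ext¹(E/N, N) = 0` lets
one correct a lift `P₀ → E` of the augmentation of a projective resolution of `E/N` so that it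
descends to a section. Injective modules have vanishing higher `Ext` in the second variable.
-/

open Limits

section

variable {S : Type u} [Ring S]

lemma extVanish_iff_exactAt {M : ModuleCat.{u} S} (P : ProjectiveResolution M)
    (N : ModuleCat.{u} S) (j : ℕ) :
    extVanish S j M N ↔ (P.complex.linearYonedaObj ℤ N).ExactAt j := by
  rw [HomologicalComplex.exactAt_iff_isZero_homology, ← (P.isoExt j N).isZero_iff,
    ModuleCat.isZero_iff_subsingleton]
  rfl

lemma extVanish_succ_of_injective (M N : ModuleCat.{u} S) [Injective N] (j : ℕ) :
    extVanish S (j + 1) M N := by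
  let P : ProjectiveResolution M := Classical.choice HasProjectiveResolution.out
  rw [extVanish_iff_exactAt P, HomologicalComplex.exactAt_iff' _ j (j + 1) (j + 2)
    (by simp) (by simp), ShortComplex.moduleCat_exact_iff]
  intro (g : P.complex.X (j + 1) ⟶ N) (hg : P.complex.d (j + 2) (j + 1) ≫ g = 0)
  exact ⟨(P.exact_succ j).descToInjective g hg, (P.exact_succ j).comp_descToInjective g hg⟩

lemma injective_of_forall_extVanish_one (N : ModuleCat.{u} S)
    (H : ∀ X : ModuleCat.{u} S, extVanish S 1 X N) : Injective N := by
  let ι : N ⟶ Injective.under N := Injective.ι N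
  let T : ShortComplex (ModuleCat.{u} S) :=
    ShortComplex.mk ι (cokernel.π ι) (cokernel.condition ι)
  have hT : T.Exact := T.exact_of_g_is_cokernel (cokernelIsCokernel ι)
  let P : ProjectiveResolution T.X₃ := Classical.choice HasProjectiveResolution.out
  let π₀ : P.complex.X 0 ⟶ T.X₃ := P.π.f 0
  let σ : P.complex.X 0 ⟶ T.X₂ := Projective.factorThru π₀ (cokernel.π ι)
  have hσ : σ ≫ T.g = π₀ := Projective.factorThru_comp _ _
  have hπ₀ : P.complex.d 1 0 ≫ π₀ = 0 := P.complex_d_comp_π_f_zero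
  have hexact₀ : (ShortComplex.mk _ _ hπ₀).Exact := P.exact₀
  have : Epi π₀ := inferInstanceAs (Epi (P.π.f 0))
  let g : P.complex.X 1 ⟶ N := hT.lift (P.complex.d 1 0 ≫ σ) (by
    rw [Category.assoc, hσ, hπ₀])
  have hg : g ≫ ι = P.complex.d 1 0 ≫ σ := hT.lift_f _ _
  have hcocycle : P.complex.d 2 1 ≫ g = 0 := by
    rw [← cancel_mono ι, Category.assoc, hg, P.complex.d_comp_d_assoc, zero_comp, zero_comp]
  -- `Ext¹(coker ι, N) = 0` turns the cocycle `g` into a coboundary.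
  obtain ⟨h, hh⟩ : ∃ h : P.complex.X 0 ⟶ N, P.complex.d 1 0 ≫ h = g := by
    have := (extVanish_iff_exactAt P N 1).1 (H T.X₃)
    rw [HomologicalComplex.exactAt_iff' _ 0 1 2 (by simp) (by simp),
      ShortComplex.moduleCat_exact_iff] at this
    exact this g hcocycle
  let s : T.X₃ ⟶ T.X₂ := hexact₀.desc (σ - h ≫ ι) (by
    rw [Preadditive.comp_sub, ← Category.assoc, hh, hg, sub_self])
  have hs : s ≫ T.g = 𝟙 T.X₃ := by
    rw [← cancel_epi π₀, ← Category.assoc, hexact₀.g_desc, Preadditive.sub_comp, hσ,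
      Category.assoc, T.zero, comp_zero, sub_zero, Category.comp_id]
  let splitting := ShortComplex.Splitting.ofExactOfSection T hT s hs inferInstance
  exact Retract.injective ⟨ι, splitting.r, splitting.f_r⟩

end

lemma nwfdLE_of_lnspGldimLE (R : Type u) [Ring R] {n k : ℕ} (h : lnspGldimLE R n k)
    (X : ModuleCat.{u} Rᵐᵒᵖ) : nwfdLE R n k X :=
  fun K hK => h K hK (charLeft R X)

lemma injective_of_isNKWeakCotorsion (R : Type u) [Ring R] {n k : ℕ}
    (h : lnspGldimLE R n k) {N : ModuleCat.{u} Rᵐᵒᵖ} (hN : IsNKWeakCotorsion R n k N) :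
    Injective N :=
  injective_of_forall_extVanish_one N fun X => hN X (nwfdLE_of_lnspGldimLE R h X)

theorem stmt16_general (R : Type u) [Ring R] (n k : ℕ) (h : lnspGldimLE R n k)
    (i : ℕ) (M N : ModuleCat.{u} Rᵐᵒᵖ)
    (hN : IsNKWeakCotorsion R n k N) :
    extVanish Rᵐᵒᵖ (1 + i) M N := by
  have := injective_of_isNKWeakCotorsion R h hN
  rw [Nat.add_comm]
  exact extVanish_succ_of_injective M N i

/-- if `l.n.sp.gldim(R) ≤ k`, then `Ext^{1+i}(M, N) = 0` for all
`i ≥ m`, all `(n, k+m)`-weak cotorsion `M` and all `(n,k)`-weak cotorsion `N`. -/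
theorem stmt16 (R : Type u) [Ring R] (n k : ℕ) (h : lnspGldimLE R n k)
    (m i : ℕ) (him : m ≤ i) (M N : ModuleCat.{u} Rᵐᵒᵖ)
    (hM : IsNKWeakCotorsion R n (k + m) M) (hN : IsNKWeakCotorsion R n k N) :
    extVanish Rᵐᵒᵖ (1 + i) M N :=
  stmt16_general R n k h i M N hN
end
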